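/- arXiv:1107.5194 — 2 statements merged into one kernel-verified Lean document; each statement's English description precedes it below -/
import Mathlib

section
/- Let δ > 0, let M be an m×n real matrix with all entries nonnegative, let H ∈ ℝ^{r×n} have all entries at least δ, and let W^{(0)} ∈ ℝ^{m×r} have all entries at least δ (with m, n, r ≥ 1). Define the inner iteration sequence W^{(l+1)}_{ip} = max(δ, W^{(l)}_{ip} · (M Hᵀ)_{ip} / (W^{(l)} H Hᵀ)_{ip}). Then every iterate W^{(l)} has all entries at least δ, and the sequence of errors l ↦ ‖M − W^{(l)} H‖_F is nonincreasing. -/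
/-!
Fix a row `x` of `M` and the matching row `w` of `W`; the update acts row by row. Writing
`S = H Hᵀ`, `a = x Hᵀ`, `b = w S` and `d = w' - w` for the step, the squared residual changes by
`-2 d·(a - b) + d·S d`. Since `S` is symmetric and nonnegative, `d·S d ≤ Σₚ (bₚ / wₚ) dₚ²`
(Lee–Seung), so the change is bounded by a separable quadratic in `d`. Its `p`-th term is
`(bₚ / wₚ) ((w'ₚ - tₚ)² - (wₚ - tₚ)²)` with `tₚ = wₚ aₚ / bₚ` the unconstrained minimizer, and it is
nonpositive because `w'ₚ = max δ tₚ` is the projection of `tₚ` onto `[δ, ∞)`, which contains `wₚ`.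
-/

open Matrix

/-- The Frobenius norm of a real matrix: `‖A‖_F = (Σ_{i,j} A_{ij}²)^{1/2}`. -/
noncomputable def frobNorm {m n : ℕ} (A : Matrix (Fin m) (Fin n) ℝ) : ℝ :=
  Real.sqrt (∑ i, ∑ j, (A i j) ^ 2)

lemma frobNorm_le_frobNorm {m n : ℕ} {A B : Matrix (Fin m) (Fin n) ℝ}
    (h : ∀ i, A i ⬝ᵥ A i ≤ B i ⬝ᵥ B i) : frobNorm A ≤ frobNorm B := by
  unfold frobNorm
  refine Real.sqrt_le_sqrt (Finset.sum_le_sum fun i _ => ?_)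
  simpa only [dotProduct, sq] using h i

lemma sq_max_sub_le {δ w t : ℝ} (hw : δ ≤ w) : (max δ t - t) ^ 2 ≤ (w - t) ^ 2 := by
  rcases le_total δ t with h | h
  · simp [max_eq_right h, sq_nonneg]
  · rw [max_eq_left h]
    nlinarith

lemma neg_two_mul_add_div_mul_sq_nonpos_of_max {δ w a b : ℝ} (hw0 : 0 < w) (hw : δ ≤ w)
    (hb : 0 < b) :
    -2 * ((max δ (w * a / b) - w) * (a - b)) + b / w * (max δ (w * a / b) - w) ^ 2 ≤ 0 := by
  set t := w * a / b
  have hcomplete : -2 * ((max δ t - w) * (a - b)) + b / w * (max δ t - w) ^ 2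
      = b / w * ((max δ t - t) ^ 2 - (w - t) ^ 2) := by
    simp only [t]
    field_simp
    ring
  rw [hcomplete]
  exact mul_nonpos_of_nonneg_of_nonpos (div_pos hb hw0).le
    (sub_nonpos.mpr (sq_max_sub_le hw))

lemma isSymm_mul_transpose {ι κ α : Type*} [Fintype ι] [CommSemiring α] (H : Matrix κ ι α) :
    (H * Hᵀ).IsSymm := by
  simp [IsSymm, transpose_mul]

lemma mul_transpose_apply_pos {ι κ : Type*} [Fintype ι] [Nonempty ι] {H : Matrix κ ι ℝ}
    (hH : ∀ p j, 0 < H p j) (p q : κ) : 0 < (H * Hᵀ) p q :=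
  Finset.sum_pos (fun j _ => mul_pos (hH p j) (hH q j)) Finset.univ_nonempty

section

variable {ι κ : Type*} [Fintype ι] [Fintype κ]

lemma dotProduct_self_sub_add_vecMul (x : ι → ℝ) (H : Matrix κ ι ℝ) (w d : κ → ℝ) :
    (x - (w + d) ᵥ* H) ⬝ᵥ (x - (w + d) ᵥ* H) =
      (x - w ᵥ* H) ⬝ᵥ (x - w ᵥ* H) - 2 * (d ⬝ᵥ (x ᵥ* Hᵀ - w ᵥ* (H * Hᵀ)))
        + d ⬝ᵥ ((H * Hᵀ) *ᵥ d) := by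
  have hcross : (x - w ᵥ* H) ⬝ᵥ (d ᵥ* H) = d ⬝ᵥ (x ᵥ* Hᵀ - w ᵥ* (H * Hᵀ)) := by
    rw [← vecMul_vecMul, ← sub_vecMul, dotProduct_comm d, ← dotProduct_mulVec, mulVec_transpose]
  have hquad : (d ᵥ* H) ⬝ᵥ (d ᵥ* H) = d ⬝ᵥ ((H * Hᵀ) *ᵥ d) := by
    rw [← mulVec_mulVec, dotProduct_mulVec, mulVec_transpose]
  rw [add_vecMul, ← sub_sub]
  generalize x - w ᵥ* H = e at hcross ⊢
  rw [sub_dotProduct, dotProduct_sub, dotProduct_sub, dotProduct_comm (d ᵥ* H) e, hcross, hquad]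
  ring

lemma dotProduct_mulVec_le_sum_div_mul_sq {S : Matrix κ κ ℝ} (hS : S.IsSymm)
    (hS0 : ∀ p q, 0 ≤ S p q) {w : κ → ℝ} (hw : ∀ p, 0 < w p) (d : κ → ℝ) :
    d ⬝ᵥ (S *ᵥ d) ≤ ∑ p, (w ᵥ* S) p / w p * d p ^ 2 := by
  have amgm : ∀ p q, d p * (S p q * d q) ≤
      (S p q * (w q / w p * d p ^ 2) + S q p * (w p / w q * d q ^ 2)) / 2 := by
    intro p q
    have hp := hw p
    have hq := hw q
    have hpq : 2 * (d p * d q) ≤ w q / w p * d p ^ 2 + w p / w q * d q ^ 2 := by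
      have hgap : w q / w p * d p ^ 2 + w p / w q * d q ^ 2 - 2 * (d p * d q)
          = (w q * d p - w p * d q) ^ 2 / (w p * w q) := by
        field_simp
        ring
      have := div_nonneg (sq_nonneg (w q * d p - w p * d q)) (mul_pos hp hq).le
      linarith
    rw [hS.apply p q]
    nlinarith [hS0 p q]
  calc d ⬝ᵥ (S *ᵥ d) = ∑ p, ∑ q, d p * (S p q * d q) := by
        simp only [dotProduct, mulVec, Finset.mul_sum]
    _ ≤ ∑ p, ∑ q, (S p q * (w q / w p * d p ^ 2) + S q p * (w p / w q * d q ^ 2)) / 2 := by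
        gcongr with p _ q _
        exact amgm p q
    _ = ∑ p, ∑ q, S p q * (w q / w p * d p ^ 2) := by
        simp only [← Finset.sum_div, Finset.sum_add_distrib]
        rw [Finset.sum_comm (f := fun p q => S q p * (w p / w q * d q ^ 2))]
        ring
    _ = ∑ p, (w ᵥ* S) p / w p * d p ^ 2 := by
        refine Finset.sum_congr rfl fun p _ => ?_
        simp only [vecMul, dotProduct, Finset.sum_mul, Finset.sum_div]
        refine Finset.sum_congr rfl fun q _ => ?_
        rw [hS.apply p q]
        ring

lemma vecMul_mul_transpose_pos [Nonempty ι] {H : Matrix κ ι ℝ} (hH : ∀ p j, 0 < H p j)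
    {w : κ → ℝ} (hw : ∀ p, 0 < w p) (p : κ) : 0 < (w ᵥ* (H * Hᵀ)) p :=
  Finset.sum_pos (fun q _ => mul_pos (hw q) (mul_transpose_apply_pos hH q p))
    ⟨p, Finset.mem_univ p⟩

theorem dotProduct_self_sub_vecMul_le_of_mu_update [Nonempty ι] {δ : ℝ} (hδ : 0 < δ)
    (x : ι → ℝ) {H : Matrix κ ι ℝ} (hH : ∀ p j, 0 < H p j) {w w' : κ → ℝ}
    (hw : ∀ p, δ ≤ w p)
    (hw' : ∀ p, w' p = max δ (w p * (x ᵥ* Hᵀ) p / (w ᵥ* (H * Hᵀ)) p)) :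
    (x - w' ᵥ* H) ⬝ᵥ (x - w' ᵥ* H) ≤ (x - w ᵥ* H) ⬝ᵥ (x - w ᵥ* H) := by
  have hw0 : ∀ p, 0 < w p := fun p => hδ.trans_le (hw p)
  set a := x ᵥ* Hᵀ
  set b := w ᵥ* (H * Hᵀ)
  set d := w' - w
  have hw'_eq : w' = w + d := (add_sub_cancel w w').symm
  calc (x - w' ᵥ* H) ⬝ᵥ (x - w' ᵥ* H)
      = (x - w ᵥ* H) ⬝ᵥ (x - w ᵥ* H) - 2 * (d ⬝ᵥ (a - b)) + d ⬝ᵥ ((H * Hᵀ) *ᵥ d) := by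
        rw [hw'_eq, dotProduct_self_sub_add_vecMul]
    _ ≤ (x - w ᵥ* H) ⬝ᵥ (x - w ᵥ* H) - 2 * (d ⬝ᵥ (a - b)) + ∑ p, b p / w p * d p ^ 2 := by
        gcongr
        exact dotProduct_mulVec_le_sum_div_mul_sq (isSymm_mul_transpose H)
          (fun p q => (mul_transpose_apply_pos hH p q).le) hw0 d
    _ = (x - w ᵥ* H) ⬝ᵥ (x - w ᵥ* H)
          + ∑ p, (-2 * (d p * (a p - b p)) + b p / w p * d p ^ 2) := by
        rw [Finset.sum_add_distrib, ← Finset.mul_sum]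
        simp only [dotProduct, Pi.sub_apply]
        ring
    _ ≤ (x - w ᵥ* H) ⬝ᵥ (x - w ᵥ* H) := by
        refine add_le_of_nonpos_right (Finset.sum_nonpos fun p _ => ?_)
        simp only [d, Pi.sub_apply, hw' p]
        exact neg_two_mul_add_div_mul_sq_nonpos_of_max (hw0 p) (hw p)
          (vecMul_mul_transpose_pos hH hw0 p)

end

theorem mu_delta_inner_iterations_general {m n r : ℕ}
    (hn : 1 ≤ n)
    (δ : ℝ) (hδ : 0 < δ)
    (M : Matrix (Fin m) (Fin n) ℝ)
    (H : Matrix (Fin r) (Fin n) ℝ) (hH : ∀ p j, δ ≤ H p j)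
    (Wseq : ℕ → Matrix (Fin m) (Fin r) ℝ)
    (h0 : ∀ i p, δ ≤ Wseq 0 i p)
    (hstep : ∀ l i p, Wseq (l + 1) i p =
      max δ (Wseq l i p * (M * Hᵀ) i p / (Wseq l * H * Hᵀ) i p)) :
    (∀ l i p, δ ≤ Wseq l i p) ∧
    Antitone (fun l => frobNorm (M - Wseq l * H)) := by
  have hW : ∀ l i p, δ ≤ Wseq l i p := by
    intro l
    induction l with
    | zero => exact h0
    | succ l _ => exact fun i p => (hstep l i p).symm ▸ le_max_left _ _
  refine ⟨hW, antitone_nat_of_succ_le fun l => frobNorm_le_frobNorm fun i => ?_⟩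
  have : Nonempty (Fin n) := Fin.pos_iff_nonempty.mp hn
  refine dotProduct_self_sub_vecMul_le_of_mu_update hδ (M i)
    (fun p j => hδ.trans_le (hH p j)) (hW l i) fun p => ?_
  rw [hstep, Matrix.mul_assoc]
  rfl

/-- For the inner iteration sequence of δ-truncated multiplicative updates of `W`
(with `H` fixed), every iterate has entries at least `δ`, and the sequence of
residual Frobenius norms is nonincreasing. -/
theorem mu_delta_inner_iterations {m n r : ℕ}
    (hm : 1 ≤ m) (hn : 1 ≤ n) (hr : 1 ≤ r)
    (δ : ℝ) (hδ : 0 < δ)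
    (M : Matrix (Fin m) (Fin n) ℝ) (hM : ∀ i j, 0 ≤ M i j)
    (H : Matrix (Fin r) (Fin n) ℝ) (hH : ∀ p j, δ ≤ H p j)
    (Wseq : ℕ → Matrix (Fin m) (Fin r) ℝ)
    (h0 : ∀ i p, δ ≤ Wseq 0 i p)
    (hstep : ∀ l i p, Wseq (l + 1) i p =
      max δ (Wseq l i p * (M * Hᵀ) i p / (Wseq l * H * Hᵀ) i p)) :
    (∀ l i p, δ ≤ Wseq l i p) ∧
    Antitone (fun l => frobNorm (M - Wseq l * H)) :=
  mu_delta_inner_iterations_general hn δ hδ M H hH Wseq h0 hstep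
end

section
/- Let M ∈ ℝ^{m×n}, let W^{(0)} ∈ ℝ^{m×r} have nonnegative entries, and let H ∈ ℝ^{r×n} have all rows nonzero. Define the full HALS sweep W^{(r)} by successively, for p = 1, 2, …, r, replacing the p-th column of the current matrix W^{(p−1)} by the vector with entries max(0, ((M Hᵀ)_{ip} − Σ_{l<p} W^{(p)}_{il} (H Hᵀ)_{lp} − Σ_{l>p} W^{(p−1)}_{il} (H Hᵀ)_{lp}) / (H Hᵀ)_{pp}). Then each intermediate matrix is nonnegative and the sequence of errors p ↦ ‖M − W^{(p)} H‖_F is nonincreasing; in particular ‖M − W^{(r)} H‖_F ≤ ‖M − W^{(0)} H‖_F. -/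
open Matrix Finset

theorem isMinOn_quadratic_Ici_max_zero_div {a : ℝ} (b : ℝ) (ha : 0 < a) :
    IsMinOn (fun t => a * t ^ 2 - 2 * b * t) (Set.Ici 0) (max 0 (b / a)) := by
  refine isMinOn_iff.mpr fun s (hs : 0 ≤ s) => ?_
  rcases le_or_gt b 0 with hb | hb
  · rw [max_eq_left (div_nonpos_of_nonpos_of_nonneg hb ha.le)]
    nlinarith
  · rw [max_eq_right (by positivity)]
    have hab : a * (b / a) = b := mul_div_cancel₀ b ha.ne'
    nlinarith [sq_nonneg (a * s - b)]

section
variable {ι : Type*} [Fintype ι]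

theorem sum_sq_sub_mul_eq (x y : ι → ℝ) (t : ℝ) :
    ∑ j, (x j - t * y j) ^ 2 = x ⬝ᵥ x - 2 * t * (x ⬝ᵥ y) + t ^ 2 * (y ⬝ᵥ y) := by
  simp only [dotProduct, mul_sum, ← sum_sub_distrib, ← sum_add_distrib]
  exact sum_congr rfl fun j _ => by ring

theorem isMinOn_sum_sq_sub_mul (x y : ι → ℝ) :
    IsMinOn (fun t => ∑ j, (x j - t * y j) ^ 2) (Set.Ici 0)
      (max 0 (x ⬝ᵥ y / y ⬝ᵥ y)) := by
  rcases eq_or_ne y 0 with rfl | hy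
  · simp [IsMinOn, IsMinFilter]
  have hyy : 0 < y ⬝ᵥ y :=
    (sum_nonneg fun j _ => mul_self_nonneg (y j)).lt_of_ne' (dotProduct_self_eq_zero.not.mpr hy)
  refine isMinOn_iff.mpr fun s hs => ?_
  have := isMinOn_iff.mp (isMinOn_quadratic_Ici_max_zero_div (x ⬝ᵥ y) hyy) s hs
  simp only [sum_sq_sub_mul_eq] at this ⊢
  linarith
end

theorem Finset.sum_filter_lt_add_sum_filter_gt {ι M : Type*} [Fintype ι] [LinearOrder ι]
    [AddCommMonoid M] (f : ι → M) {p : ι} (hp : f p = 0) :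
    ∑ l ∈ univ.filter (· < p), f l + ∑ l ∈ univ.filter (p < ·), f l = ∑ l, f l := by
  rw [← sum_union (disjoint_filter.mpr fun l _ hlt hgt => lt_asymm hlt hgt)]
  refine sum_subset (subset_univ _) fun l _ hl => ?_
  obtain rfl : l = p := by simpa [not_or, le_antisymm_iff, and_comm] using hl
  exact hp

namespace Matrix

theorem updateCol_mul_apply {m n r α : Type*} [Fintype r] [DecidableEq r]
    [NonUnitalNonAssocSemiring α] (W : Matrix m r α) (H : Matrix r n α) (p : r) (c : m → α)
    (i : m) (j : n) :
    (W.updateCol p c * H) i j = (W.updateCol p 0 * H) i j + c i * H p j := by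
  simp only [mul_apply, Fintype.sum_eq_add_sum_compl p, updateCol_self, Pi.zero_apply, zero_mul,
    zero_add]
  rw [add_comm]
  congr 1
  exact sum_congr rfl fun l hl => by
    rw [updateCol_ne (by simpa using hl), updateCol_ne (by simpa using hl)]

end Matrix

section HALS
variable {m n r : Type*} [Fintype n] [Fintype r] [DecidableEq r]

/-- If row `p` of `H` vanishes, the division by `0` sets column `p` to `0`, which leaves
`W * H` unchanged. -/
noncomputable def halsColUpdate (M : Matrix m n ℝ) (H : Matrix r n ℝ) (W : Matrix m r ℝ) (p : r) :
    Matrix m r ℝ :=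
  W.updateCol p fun i => max 0 (((M - W.updateCol p 0 * H) * Hᵀ) i p / (H * Hᵀ) p p)

theorem halsColUpdate_nonneg (M : Matrix m n ℝ) (H : Matrix r n ℝ) {W : Matrix m r ℝ}
    (hW : ∀ i l, 0 ≤ W i l) (p : r) (i : m) (l : r) : 0 ≤ halsColUpdate M H W p i l := by
  rcases eq_or_ne l p with rfl | hl
  · simp [halsColUpdate]
  · rw [halsColUpdate, updateCol_ne hl]
    exact hW i l

theorem sum_sq_sub_halsColUpdate_mul_le [Fintype m] (M : Matrix m n ℝ) (H : Matrix r n ℝ)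
    (W : Matrix m r ℝ) (p : r) {c : m → ℝ} (hc : ∀ i, 0 ≤ c i) :
    ∑ i, ∑ j, (M - halsColUpdate M H W p * H) i j ^ 2 ≤
      ∑ i, ∑ j, (M - W.updateCol p c * H) i j ^ 2 := by
  set R := M - W.updateCol p 0 * H
  have hres : ∀ c : m → ℝ, ∀ i j, (M - W.updateCol p c * H) i j = R i j - c i * H p j :=
    fun c i j => by rw [Matrix.sub_apply, updateCol_mul_apply, ← sub_sub]; rfl
  refine sum_le_sum fun i _ => ?_
  simp only [halsColUpdate, hres]
  simpa only [mul_apply', transpose_apply, updateCol_self] using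
    isMinOn_iff.mp (isMinOn_sum_sq_sub_mul (R i) (H p)) (c i) (hc i)

end HALS

theorem eq_halsColUpdate_of_eq_updateCol {m n r : Type*} [Fintype n] [Fintype r] [LinearOrder r]
    (M : Matrix m n ℝ) (H : Matrix r n ℝ) {W W' : Matrix m r ℝ} (p : r)
    (h : W' = W.updateCol p (fun i => max 0 (((M * Hᵀ) i p
      - ∑ l ∈ univ.filter (fun l => l < p), W' i l * (H * Hᵀ) l p
      - ∑ l ∈ univ.filter (fun l => p < l), W i l * (H * Hᵀ) l p) / (H * Hᵀ) p p))) :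
    W' = halsColUpdate M H W p := by
  have hoff : ∀ i l, l ≠ p → W' i l = W i l := fun i l hl => by rw [h, updateCol_ne hl]
  rw [h, halsColUpdate]
  congr! 5 with i
  rw [Matrix.sub_mul, Matrix.mul_assoc, Matrix.sub_apply, mul_apply (M := W.updateCol p 0),
    sub_sub, ← sum_filter_lt_add_sum_filter_gt _ (by rw [updateCol_self, Pi.zero_apply, zero_mul])]
  congr 2 <;> refine sum_congr rfl fun l hl => ?_
  · rw [hoff i l (mem_filter.mp hl).2.ne, updateCol_ne (mem_filter.mp hl).2.ne]
  · rw [updateCol_ne (mem_filter.mp hl).2.ne']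

theorem hals_full_sweep_nonincreasing_general {m n r : ℕ}
    (M : Matrix (Fin m) (Fin n) ℝ)
    (H : Matrix (Fin r) (Fin n) ℝ)
    (Wseq : ℕ → Matrix (Fin m) (Fin r) ℝ)
    (h0 : ∀ i l, 0 ≤ Wseq 0 i l)
    (hstep : ∀ p : Fin r, Wseq (p.val + 1) = (Wseq p.val).updateCol p (fun i =>
      max 0 (((M * Hᵀ) i p
        - ∑ l ∈ univ.filter (fun l => l < p), Wseq (p.val + 1) i l * (H * Hᵀ) l p
        - ∑ l ∈ univ.filter (fun l => p < l), Wseq p.val i l * (H * Hᵀ) l p)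
        / (H * Hᵀ) p p))) :
    (∀ k ≤ r, ∀ i l, 0 ≤ Wseq k i l) ∧
    (∀ k < r, frobNorm (M - Wseq (k + 1) * H) ≤ frobNorm (M - Wseq k * H)) ∧
    frobNorm (M - Wseq r * H) ≤ frobNorm (M - Wseq 0 * H) := by
  have hupd (k : ℕ) (hk : k < r) : Wseq (k + 1) = halsColUpdate M H (Wseq k) ⟨k, hk⟩ :=
    eq_halsColUpdate_of_eq_updateCol M H _ (hstep ⟨k, hk⟩)
  have nonneg : ∀ k ≤ r, ∀ i l, 0 ≤ Wseq k i l := by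
    intro k hk
    induction k with
    | zero => exact h0
    | succ k ih => rw [hupd k hk]; exact halsColUpdate_nonneg M H (ih (by omega)) _
  have mono (k : ℕ) (hk : k < r) :
      frobNorm (M - Wseq (k + 1) * H) ≤ frobNorm (M - Wseq k * H) := by
    have h := sum_sq_sub_halsColUpdate_mul_le M H (Wseq k) ⟨k, hk⟩
      (c := fun i => Wseq k i ⟨k, hk⟩) fun i => nonneg k hk.le i _
    rw [updateCol_eq_self, ← hupd k hk] at h
    exact Real.sqrt_le_sqrt h
  have anti : AntitoneOn (fun k => frobNorm (M - Wseq k * H)) (Set.Iic r) :=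
    antitoneOn_of_succ_le Set.ordConnected_Iic fun k _ _ hk => by
      rw [Order.succ_eq_add_one] at hk ⊢
      exact mono k hk
  exact ⟨nonneg, mono, anti r.zero_le (Set.mem_Iic.mpr le_rfl) r.zero_le⟩

/-- A full HALS sweep over the columns of `W` (successively replacing each column by
its closed-form optimal nonnegative update) keeps all intermediate matrices
nonnegative and makes the residual error nonincreasing; in particular the error after
the full sweep is at most the initial error. -/
theorem hals_full_sweep_nonincreasing {m n r : ℕ}
    (M : Matrix (Fin m) (Fin n) ℝ)
    (H : Matrix (Fin r) (Fin n) ℝ) (hH : ∀ p : Fin r, H p ≠ 0)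
    (Wseq : ℕ → Matrix (Fin m) (Fin r) ℝ)
    (h0 : ∀ i l, 0 ≤ Wseq 0 i l)
    (hstep : ∀ p : Fin r, Wseq (p.val + 1) = (Wseq p.val).updateCol p (fun i =>
      max 0 (((M * Hᵀ) i p
        - ∑ l ∈ univ.filter (fun l => l < p), Wseq (p.val + 1) i l * (H * Hᵀ) l p
        - ∑ l ∈ univ.filter (fun l => p < l), Wseq p.val i l * (H * Hᵀ) l p)
        / (H * Hᵀ) p p))) :
    (∀ k ≤ r, ∀ i l, 0 ≤ Wseq k i l) ∧
    (∀ k < r, frobNorm (M - Wseq (k + 1) * H) ≤ frobNorm (M - Wseq k * H)) ∧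
    frobNorm (M - Wseq r * H) ≤ frobNorm (M - Wseq 0 * H) :=
  hals_full_sweep_nonincreasing_general M H Wseq h0 hstep
end
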